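/- For Talagrand's first pathological submeasure ψ one has ψ(𝒯) = η(1)^{α(1)} = 2^{2500/216}. -/

import Mathlib

noncomputable section

/-- 𝒯 = ∏_{n∈ℕ} [2^n]  (the paper's index `n ∈ {1,2,…}` is the Lean index `n+1`). -/
abbrev Tal : Type := (n : ℕ) → Fin (2 ^ (n + 1))

/-- `S_{n,τ} = {f ∈ 𝒯 : f(n) ≠ τ}`. -/
def Sset (n : ℕ) (τ : Fin (2 ^ (n + 1))) : Set Tal := {f | f n ≠ τ}

/-- The 𝒟-set `⋂_{n ∈ I} S_{n, t n}` with (nonempty, finite) index set `I`;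
only the values of `t` on `I` matter. -/
def DSet (I : Finset ℕ) (t : (n : ℕ) → Fin (2 ^ (n + 1))) : Set Tal :=
  {f | ∀ n ∈ I, f n ≠ t n}

/-- `η(k) = 2^{2500 k⁴}`. -/
def ηT (k : ℕ) : ℕ := 2 ^ (2500 * k ^ 4)

/-- `α(k) = (k+5)^{-3}`. -/
def αT (k : ℕ) : ℝ := (((k : ℝ) + 5) ^ 3)⁻¹

/-- `δ(m) = min {n ∈ ℕ : η(n) ≥ m}` (with `ℕ = {1,2,…}`). -/
def δT (m : ℕ) : ℕ := sInf {n : ℕ | 1 ≤ n ∧ m ≤ ηT n}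

/-- `w(n) = 2^{-δ(n)} (η(δ(n))/n)^{α(δ(n))}`. -/
def wT (n : ℕ) : ℝ :=
  (2 : ℝ) ^ (-(δT n : ℤ)) * ((ηT (δT n) : ℝ) / (n : ℝ)) ^ (αT (δT n))

/-- Membership in Talagrand's family 𝒟 for a triple `(X, I, w)`:  for some `k ∈ {1,2,…}`,
`X` is a 𝒟-set with index set `I`, `1 ≤ |I| ≤ η(k)`, and `w = 2^{-k}(η(k)/|I|)^{α(k)}`. -/
def memD (p : Set Tal × Finset ℕ × ℝ) : Prop :=
  ∃ k : ℕ, 1 ≤ k ∧ (∃ t : (n : ℕ) → Fin (2 ^ (n + 1)), p.1 = DSet p.2.1 t) ∧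
    p.2.1.Nonempty ∧ p.2.1.card ≤ ηT k ∧
    p.2.2 = (2 : ℝ) ^ (-(k : ℤ)) * ((ηT k : ℝ) / (p.2.1.card : ℝ)) ^ (αT k)

/-- Talagrand's first pathological submeasure:
`ψ(B) = inf { w(Y) : Y ⊆ 𝒟 finite, B ⊆ ⋃ Y }`. -/
def ψT (B : Set Tal) : ℝ :=
  sInf {r : ℝ | ∃ Y : Finset (Set Tal × Finset ℕ × ℝ), (∀ p ∈ Y, memD p) ∧
    B ⊆ (⋃ p ∈ Y, p.1) ∧ r = ∑ p ∈ Y, p.2.2}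

end

/-! A set `DSet I t` misses every `g` that agrees with `t` somewhere on `I`. Suppose a finite
family of 𝒟-sets covered 𝒯 with total weight `w(Y) < η(1)^{α(1)}`. Each member has weight at
least `η(1)^{α(1)} / (|I| + 1)`, as `|I|^{α(k)} ≤ √|I| ≤ (|I| + 1) / 2` and `2^{1-k} η(k)^{α(k)}`
is smallest at `k = 1`; so the index sets of any `s` members have a union of at least `|s|`
elements. By Hall's theorem the members then have distinct representatives `n_p ∈ I_p`, and the
point taking the value `t_p(n_p)` at each `n_p` is not covered. Conversely the two sets
`{f | f 1 ≠ 1}` and `{f | f 1 ≠ 2}` cover 𝒯 with weight `2 · 2^{-1} η(1)^{α(1)}`. -/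

open Finset

theorem exists_pi_forall_exists_eq_of_hall {ι α : Type*} [DecidableEq α] {β : α → Type*}
    [∀ a, Nonempty (β a)] (I : ι → Finset α) (t : ι → (a : α) → β a)
    (hall : ∀ s : Finset ι, #s ≤ #(s.biUnion I)) :
    ∃ g : (a : α) → β a, ∀ i, ∃ a ∈ I i, g a = t i a := by
  classical
  obtain ⟨f, hf_inj, hf_mem⟩ := (all_card_le_biUnion_card_iff_exists_injective I).mp hall
  let g : (a : α) → β a := fun a =>
    if h : ∃ i, f i = a then t h.choose a else Classical.arbitrary _
  refine ⟨g, fun i => ⟨f i, hf_mem i, ?_⟩⟩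
  have h : ∃ j, f j = f i := ⟨i, rfl⟩
  simp only [g, dif_pos h, hf_inj h.choose_spec]

theorem card_le_card_biUnion_of_sum_lt {ι α : Type*} [DecidableEq α] (I : ι → Finset α)
    (w : ι → ℝ) {W : ℝ} (hW : 0 < W) (hw : ∀ i, W ≤ (#(I i) + 1) * w i) {s u : Finset ι}
    (hsu : s ⊆ u) (hsum : ∑ i ∈ u, w i < W) : #s ≤ #(s.biUnion I) := by
  set c : ℝ := #(s.biUnion I) + 1
  have hw_pos : ∀ i, 0 < w i := fun i => pos_of_mul_pos_right (hW.trans_le (hw i)) (by positivity)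
  have hW_le : ∀ i ∈ s, W ≤ c * w i := fun i hi =>
    (hw i).trans (mul_le_mul_of_nonneg_right
      (by simp only [c]; gcongr; exact subset_biUnion_of_mem I hi) (hw_pos i).le)
  have : #s * W < c * W :=
    calc #s * W = ∑ i ∈ s, W := by rw [sum_const, nsmul_eq_mul]
      _ ≤ ∑ i ∈ s, c * w i := sum_le_sum hW_le
      _ = c * ∑ i ∈ s, w i := (mul_sum ..).symm
      _ ≤ c * ∑ i ∈ u, w i := mul_le_mul_of_nonneg_left
          (sum_le_sum_of_subset_of_nonneg hsu fun i _ _ => (hw_pos i).le) (by positivity)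
      _ < c * W := by gcongr
  have : (#s : ℝ) < #(s.biUnion I) + 1 := lt_of_mul_lt_mul_right this hW.le
  exact_mod_cast Nat.lt_succ_iff.mp (by exact_mod_cast this)

theorem rpow_le_add_one_div_two {x a : ℝ} (hx : 1 ≤ x) (ha : a ≤ 1 / 2) :
    x ^ a ≤ (x + 1) / 2 := by
  have hsqrt : √x ^ 2 = x := Real.sq_sqrt (by linarith)
  calc x ^ a ≤ x ^ (1 / 2 : ℝ) := Real.rpow_le_rpow_of_exponent_le hx ha
    _ = √x := (Real.sqrt_eq_rpow x).symm
    _ ≤ (x + 1) / 2 := by nlinarith [sq_nonneg (√x - 1)]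

theorem αT_le_one_half (k : ℕ) : αT k ≤ 1 / 2 := by
  rw [αT, ← one_div]
  have h5 : (5 : ℝ) ≤ k + 5 := by linarith [k.cast_nonneg (α := ℝ)]
  exact one_div_le_one_div_of_le (by norm_num)
    (le_trans (by norm_num) (pow_le_pow_left₀ (by norm_num) h5 3))

theorem ηT_rpow_αT (k : ℕ) :
    (ηT k : ℝ) ^ αT k = 2 ^ (2500 * (k : ℝ) ^ 4 / ((k : ℝ) + 5) ^ 3) := by
  rw [ηT, Nat.cast_pow, Nat.cast_ofNat, ← Real.rpow_natCast, ← Real.rpow_mul (by norm_num), αT]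
  push_cast
  rfl

theorem ηT_one_rpow_αT_one : (ηT 1 : ℝ) ^ αT 1 = 2 ^ ((2500 : ℝ) / 216) := by
  rw [ηT_rpow_αT]; norm_num

theorem ηT_one_rpow_le_two_mul {k : ℕ} (hk : 1 ≤ k) :
    (ηT 1 : ℝ) ^ αT 1 ≤ 2 * ((2 : ℝ) ^ (-(k : ℤ)) * (ηT k : ℝ) ^ αT k) := by
  have hk' : (1 : ℝ) ≤ k := by exact_mod_cast hk
  -- tight at `k = 1`, hence the hints in powers of `k - 1`
  have hpoly : (2500 / 216 + (k - 1)) * ((k : ℝ) + 5) ^ 3 ≤ 2500 * (k : ℝ) ^ 4 := by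
    have hx : 0 ≤ (k : ℝ) - 1 := by linarith
    nlinarith [pow_nonneg hx 2, pow_nonneg hx 3, pow_nonneg hx 4]
  have hexp : 2500 / 216 ≤ 1 + -(k : ℝ) + 2500 * (k : ℝ) ^ 4 / ((k : ℝ) + 5) ^ 3 := by
    have := (le_div_iff₀ (by positivity)).mpr hpoly
    linarith
  have h2k : (2 : ℝ) * 2 ^ (-(k : ℤ)) = 2 ^ (1 + -(k : ℝ)) := by
    rw [Real.rpow_add two_pos, Real.rpow_one, Real.rpow_neg zero_le_two, Real.rpow_natCast,
      zpow_neg, zpow_natCast]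
  rw [ηT_one_rpow_αT_one, ηT_rpow_αT, ← mul_assoc, h2k, ← Real.rpow_add two_pos]
  exact Real.rpow_le_rpow_of_exponent_le one_le_two hexp

theorem ηT_one_rpow_le_add_one_mul {k m : ℕ} (hk : 1 ≤ k) (hm : 1 ≤ m) :
    (ηT 1 : ℝ) ^ αT 1 ≤ (m + 1) * ((2 : ℝ) ^ (-(k : ℤ)) * ((ηT k : ℝ) / m) ^ αT k) := by
  have hm' : (1 : ℝ) ≤ m := by exact_mod_cast hm
  have hmα : 0 < (m : ℝ) ^ αT k := Real.rpow_pos_of_pos (by linarith) _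
  have h2m : 2 ≤ (m + 1) / (m : ℝ) ^ αT k := by
    rw [le_div_iff₀ hmα]; linarith [rpow_le_add_one_div_two hm' (αT_le_one_half k)]
  rw [Real.div_rpow (by positivity) (by positivity)]
  calc (ηT 1 : ℝ) ^ αT 1 ≤ 2 * ((2 : ℝ) ^ (-(k : ℤ)) * (ηT k : ℝ) ^ αT k) :=
        ηT_one_rpow_le_two_mul hk
    _ ≤ (m + 1) / (m : ℝ) ^ αT k * ((2 : ℝ) ^ (-(k : ℤ)) * (ηT k : ℝ) ^ αT k) := by gcongr
    _ = (m + 1) * ((2 : ℝ) ^ (-(k : ℤ)) * ((ηT k : ℝ) ^ αT k / (m : ℝ) ^ αT k)) := by ring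

theorem memD.ηT_one_rpow_le {p : Set Tal × Finset ℕ × ℝ} (hp : memD p) :
    (ηT 1 : ℝ) ^ αT 1 ≤ (#p.2.1 + 1) * p.2.2 := by
  obtain ⟨k, hk, -, hne, -, hw⟩ := hp
  rw [hw]
  exact ηT_one_rpow_le_add_one_mul hk hne.card_pos

theorem ηT_one_rpow_le_sum_of_univ_subset {Y : Finset (Set Tal × Finset ℕ × ℝ)}
    (hY : ∀ p ∈ Y, memD p) (hcov : Set.univ ⊆ ⋃ p ∈ Y, p.1) :
    (ηT 1 : ℝ) ^ αT 1 ≤ ∑ p ∈ Y, p.2.2 := by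
  by_contra! hlt
  have hD : ∀ p : Y, ∃ t, p.1.1 = DSet p.1.2.1 t := fun p => by
    obtain ⟨-, -, hD, -⟩ := hY p p.2
    exact hD
  choose t ht using hD
  have hW : (0 : ℝ) < (ηT 1 : ℝ) ^ αT 1 := by rw [ηT_one_rpow_αT_one]; positivity
  obtain ⟨g, hg⟩ := exists_pi_forall_exists_eq_of_hall (fun p : Y => p.1.2.1) t fun s =>
    card_le_card_biUnion_of_sum_lt _ (fun p : Y => p.1.2.2) hW
      (fun p => (hY p p.2).ηT_one_rpow_le) (subset_univ s)
      (by rwa [sum_coe_sort Y fun p => p.2.2])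
  obtain ⟨p, hpY, hgp⟩ := Set.mem_iUnion₂.mp (hcov (Set.mem_univ g))
  obtain ⟨n, hn, hgn⟩ := hg ⟨p, hpY⟩
  rw [ht ⟨p, hpY⟩] at hgp
  exact hgp n hn hgn

theorem DSet_singleton (n : ℕ) (t : (n : ℕ) → Fin (2 ^ (n + 1))) :
    DSet {n} t = Sset n (t n) := by
  simp [DSet, Sset]

theorem exists_cover_sum_eq : ∃ Y : Finset (Set Tal × Finset ℕ × ℝ), (∀ p ∈ Y, memD p) ∧
    Set.univ ⊆ (⋃ p ∈ Y, p.1) ∧ (ηT 1 : ℝ) ^ αT 1 = ∑ p ∈ Y, p.2.2 := by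
  let c : ℝ := (2 : ℝ) ^ (-((1 : ℕ) : ℤ)) * ((ηT 1 : ℝ) / ((#{0} : ℕ) : ℝ)) ^ αT 1
  let t : Fin 2 → (n : ℕ) → Fin (2 ^ (n + 1)) := fun j n =>
    ⟨j, j.2.trans_le (Nat.le_self_pow (by omega) 2)⟩
  have hmem : ∀ j, memD (DSet {0} (t j), {0}, c) := fun j =>
    ⟨1, le_rfl, ⟨t j, rfl⟩, singleton_nonempty 0,
      by rw [card_singleton]; exact Nat.one_le_two_pow, rfl⟩
  have hne : DSet {0} (t 0) ≠ DSet {0} (t 1) := by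
    intro h
    have : t 1 ∈ DSet {0} (t 0) := by simp [DSet_singleton, Sset, t]
    rw [h, DSet_singleton] at this
    exact this rfl
  refine ⟨{(DSet {0} (t 0), {0}, c), (DSet {0} (t 1), {0}, c)}, ?_, ?_, ?_⟩
  · simp only [mem_insert, mem_singleton]
    rintro p (rfl | rfl) <;> exact hmem _
  · intro f _
    simp only [mem_insert, mem_singleton, Set.mem_iUnion, exists_prop, DSet_singleton, Sset]
    by_cases hf : f 0 = t 0 0
    · exact ⟨_, Or.inr rfl, fun h => by simp [hf, t] at h⟩
    · exact ⟨_, Or.inl rfl, hf⟩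
  · rw [sum_pair fun h => hne (congrArg Prod.fst h)]
    simp only [c, card_singleton, Nat.cast_one, div_one, zpow_neg, zpow_one]
    ring

theorem statement5 :
    ψT Set.univ = (ηT 1 : ℝ) ^ (αT 1) ∧
      (ηT 1 : ℝ) ^ (αT 1) = (2 : ℝ) ^ ((2500 : ℝ) / 216) := by
  obtain ⟨Y, hY, hcov, hsum⟩ := exists_cover_sum_eq
  have hlower : (ηT 1 : ℝ) ^ αT 1 ∈ lowerBounds {r : ℝ | ∃ Y : Finset (Set Tal × Finset ℕ × ℝ),
      (∀ p ∈ Y, memD p) ∧ Set.univ ⊆ (⋃ p ∈ Y, p.1) ∧ r = ∑ p ∈ Y, p.2.2} := by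
    rintro _ ⟨Y, hY, hcov, rfl⟩
    exact ηT_one_rpow_le_sum_of_univ_subset hY hcov
  refine ⟨le_antisymm ?_ ?_, ηT_one_rpow_αT_one⟩
  · exact csInf_le ⟨_, hlower⟩ ⟨Y, hY, hcov, hsum⟩
  · exact le_csInf ⟨_, Y, hY, hcov, hsum⟩ hlower
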